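/- Strict monotonicity of g₀ below the fracture threshold: if 0 ≤ s' < s and g₀(s) < 1, then g₀(s') < g₀(s). -/

import Mathlib

open MeasureTheory Set Filter

/-- Hypotheses on the function `f₁` from Section 6.1 of the paper. -/
structure F1Hyp (ℓ ℓ₁ : ℝ) (f₁ : ℝ → ℝ) : Prop where
  hl : 0 < ℓ
  hl1 : 0 < ℓ₁
  cont : ContinuousOn f₁ (Icc 0 1)
  diff : ∃ d : ℝ → ℝ, ContinuousOn d (Ioc 0 1) ∧
    ∀ t ∈ Ioc (0:ℝ) 1, HasDerivWithinAt f₁ (d t) (Ioc 0 1) t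
  anti : StrictAntiOn f₁ (Icc 0 1)
  nonneg : ∀ t ∈ Icc (0:ℝ) 1, 0 ≤ f₁ t
  f10 : f₁ 0 = ℓ
  f11 : f₁ 1 = 0
  convexSqrt : ConvexOn ℝ (Icc 0 1) (fun u => f₁ (Real.sqrt u))
  lim0 : Tendsto (fun s => (f₁ s - ℓ + ℓ₁ * s) / s) (nhdsWithin 0 (Ioi 0)) (nhds 0)

/-- `γ` is admissible, with a.e. derivative `γ'` (absolute continuity is encoded by the
fundamental theorem of calculus representation with an `L¹` derivative). -/
def Admissible (γ γ' : ℝ → ℝ) : Prop :=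
  IntegrableOn γ' (Icc 0 1) ∧
  (∀ t ∈ Icc (0:ℝ) 1, γ t = ∫ u in (0:ℝ)..t, γ' u) ∧
  (∀ t ∈ Icc (0:ℝ) 1, 0 ≤ γ t ∧ γ t ≤ 1) ∧
  γ 0 = 0 ∧ γ 1 = 0

/-- The energy in the characterization (6.11). -/
noncomputable def energy (f₁ : ℝ → ℝ) (s : ℝ) (γ γ' : ℝ → ℝ) : ℝ :=
  ∫ t in (0:ℝ)..1, Real.sqrt (s ^ 2 * (f₁ (Real.sqrt (γ t))) ^ 2 + (γ' t) ^ 2 / 4)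

/-- The cohesive energy density of pristine material, via characterization (6.11). -/
noncomputable def g0 (f₁ : ℝ → ℝ) (s : ℝ) : ℝ :=
  sInf {x | ∃ γ γ' : ℝ → ℝ, Admissible γ γ' ∧ x = energy f₁ s γ γ'}

/-!
Take a profile `γ` whose energy at load `s` lies below `B := (1 + g₀(s)) / 2 < 1`. Since `γ`
vanishes at both ends, `2 γ ≤ ∫ |γ'| ≤ 2 · energy`, so `γ ≤ B` and `f₁ (√γ) ≥ f₁ (√B) > 0`
along the whole curve. Lowering the load to `s'` therefore lowers the integrand by a fixed
amount wherever `|γ'|` is bounded, and the bound `∫ |γ'| ≤ 2` turns this into an energy gap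
`δ > 0` independent of `γ`; choosing `γ` within `δ` of optimal gives `g₀(s') < g₀(s)`.
-/

open intervalIntegral

namespace Admissible

variable {γ γ' : ℝ → ℝ}

lemma intervalIntegrable (hγ : Admissible γ γ') : IntervalIntegrable γ' volume 0 1 :=
  (intervalIntegrable_iff_integrableOn_Icc_of_le zero_le_one).2 hγ.1

lemma continuousOn (hγ : Admissible γ γ') : ContinuousOn γ (Icc 0 1) := by
  have h := continuousOn_primitive_interval (μ := volume) (a := 0) (b := 1) (f := γ')
    (by rw [uIcc_of_le zero_le_one]; exact hγ.1)
  rw [uIcc_of_le zero_le_one] at h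
  exact h.congr hγ.2.1

lemma sqrt_mem_Icc (hγ : Admissible γ γ') {t : ℝ} (ht : t ∈ Icc 0 1) :
    √(γ t) ∈ Icc (0 : ℝ) 1 :=
  ⟨Real.sqrt_nonneg _, Real.sqrt_le_one.2 (hγ.2.2.1 t ht).2⟩

lemma two_mul_le_integral_abs (hγ : Admissible γ γ') {t : ℝ} (ht : t ∈ Icc 0 1) :
    2 * γ t ≤ ∫ u in (0 : ℝ)..1, |γ' u| := by
  have htmem : t ∈ uIcc (0 : ℝ) 1 := mem_uIcc_of_le ht.1 ht.2
  have hsub₁ : uIcc 0 t ⊆ uIcc (0 : ℝ) 1 := uIcc_subset_uIcc left_mem_uIcc htmem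
  have hsub₂ : uIcc t 1 ⊆ uIcc (0 : ℝ) 1 := uIcc_subset_uIcc htmem right_mem_uIcc
  have hint := hγ.intervalIntegrable
  have hγt : γ t = ∫ u in (0 : ℝ)..t, γ' u := hγ.2.1 t ht
  have hγ1 : (∫ u in (0 : ℝ)..1, γ' u) = 0 := by rw [← hγ.2.1 1 (by simp)]; exact hγ.2.2.2.2
  have hsplit := integral_add_adjacent_intervals (hint.mono_set hsub₁) (hint.mono_set hsub₂)
  have hsplit_abs :=
    integral_add_adjacent_intervals (hint.abs.mono_set hsub₁) (hint.abs.mono_set hsub₂)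
  have hleft : γ t ≤ ∫ u in (0 : ℝ)..t, |γ' u| :=
    hγt ▸ (le_abs_self _).trans (abs_integral_le_integral_abs ht.1)
  have hright : γ t ≤ ∫ u in t..1, |γ' u| :=
    calc γ t = -∫ u in t..1, γ' u := by linarith
      _ ≤ |∫ u in t..1, γ' u| := neg_le_abs _
      _ ≤ ∫ u in t..1, |γ' u| := abs_integral_le_integral_abs ht.2
  linarith

end Admissible

lemma admissible_zero : Admissible 0 0 :=
  ⟨integrableOn_zero, fun _ _ => by simp, fun _ _ => by simp, rfl, rfl⟩

section Energy

variable {f₁ : ℝ → ℝ} {s : ℝ} {γ γ' : ℝ → ℝ}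

noncomputable def energyDensity (f₁ : ℝ → ℝ) (s : ℝ) (γ γ' : ℝ → ℝ) (t : ℝ) : ℝ :=
  √(s ^ 2 * f₁ (√(γ t)) ^ 2 + γ' t ^ 2 / 4)

lemma energy_eq_integral_energyDensity :
    energy f₁ s γ γ' = ∫ t in (0 : ℝ)..1, energyDensity f₁ s γ γ' t := rfl

lemma energyDensity_nonneg (t : ℝ) : 0 ≤ energyDensity f₁ s γ γ' t := Real.sqrt_nonneg _

lemma abs_le_two_mul_energyDensity (t : ℝ) : |γ' t| ≤ 2 * energyDensity f₁ s γ γ' t := by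
  have h : |γ' t| / 2 ≤ energyDensity f₁ s γ γ' t :=
    Real.le_sqrt_of_sq_le (by nlinarith [sq_abs (γ' t), sq_nonneg (s * f₁ (√(γ t)))])
  linarith

lemma energyDensity_le (t : ℝ) :
    energyDensity f₁ s γ γ' t ≤ |s| * |f₁ (√(γ t))| + |γ' t| / 2 :=
  Real.sqrt_le_iff.2 ⟨by positivity, by
    have hsf : (|s| * |f₁ (√(γ t))|) ^ 2 = s ^ 2 * f₁ (√(γ t)) ^ 2 := by
      rw [mul_pow, sq_abs, sq_abs]
    nlinarith [sq_abs (γ' t), mul_nonneg (mul_nonneg (abs_nonneg s)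
      (abs_nonneg (f₁ (√(γ t))))) (abs_nonneg (γ' t))]⟩

lemma intervalIntegrable_energyDensity (hf : ContinuousOn f₁ (Icc 0 1))
    (hγ : Admissible γ γ') : IntervalIntegrable (energyDensity f₁ s γ γ') volume 0 1 := by
  have hcomp : ContinuousOn (fun t => f₁ (√(γ t))) (Icc 0 1) :=
    hf.comp (Real.continuous_sqrt.comp_continuousOn hγ.continuousOn) fun _ => hγ.sqrt_mem_Icc
  have hbound : IntegrableOn (fun t => |s| * |f₁ (√(γ t))| + |γ' t| / 2) (Icc 0 1) :=
    ((hcomp.abs.const_smul |s|).integrableOn_Icc).add (hγ.1.abs.div_const 2)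
  have hmeas : AEStronglyMeasurable (energyDensity f₁ s γ γ') (volume.restrict (Icc 0 1)) := by
    refine Real.continuous_sqrt.comp_aestronglyMeasurable (AEStronglyMeasurable.add ?_ ?_)
    · exact ((hcomp.pow 2).const_smul (s ^ 2)).aestronglyMeasurable measurableSet_Icc
    · exact ((continuous_pow 2).div_const 4).comp_aestronglyMeasurable hγ.1.aestronglyMeasurable
  refine (intervalIntegrable_iff_integrableOn_Icc_of_le zero_le_one).2 (hbound.mono' hmeas ?_)
  filter_upwards with t
  rw [Real.norm_of_nonneg (energyDensity_nonneg t)]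
  exact energyDensity_le t

lemma energy_nonneg : 0 ≤ energy f₁ s γ γ' :=
  integral_nonneg zero_le_one fun t _ => energyDensity_nonneg t

lemma integral_abs_le_two_mul_energy (hf : ContinuousOn f₁ (Icc 0 1)) (hγ : Admissible γ γ') :
    ∫ u in (0 : ℝ)..1, |γ' u| ≤ 2 * energy f₁ s γ γ' := by
  rw [energy_eq_integral_energyDensity, ← intervalIntegral.integral_const_mul]
  exact integral_mono_on zero_le_one hγ.intervalIntegrable.abs
    ((intervalIntegrable_energyDensity hf hγ).const_mul 2) fun t _ => abs_le_two_mul_energyDensity t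

lemma Admissible.le_energy (hf : ContinuousOn f₁ (Icc 0 1)) (hγ : Admissible γ γ') {t : ℝ}
    (ht : t ∈ Icc 0 1) : γ t ≤ energy f₁ s γ γ' := by
  linarith [hγ.two_mul_le_integral_abs ht, integral_abs_le_two_mul_energy (s := s) hf hγ]

end Energy

section g0

variable {f₁ : ℝ → ℝ} {s : ℝ}

lemma g0_le_energy {γ γ' : ℝ → ℝ} (hγ : Admissible γ γ') : g0 f₁ s ≤ energy f₁ s γ γ' :=
  csInf_le ⟨0, by rintro _ ⟨γ, γ', -, rfl⟩; exact energy_nonneg⟩ ⟨γ, γ', hγ, rfl⟩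

lemma nonempty_admissible_energies :
    {x | ∃ γ γ' : ℝ → ℝ, Admissible γ γ' ∧ x = energy f₁ s γ γ'}.Nonempty :=
  ⟨_, 0, 0, admissible_zero, rfl⟩

lemma g0_nonneg : 0 ≤ g0 f₁ s :=
  le_csInf nonempty_admissible_energies (by rintro _ ⟨γ, γ', -, rfl⟩; exact energy_nonneg)

lemma exists_admissible_energy_lt {x : ℝ} (h : g0 f₁ s < x) :
    ∃ γ γ' : ℝ → ℝ, Admissible γ γ' ∧ energy f₁ s γ γ' < x := by
  obtain ⟨_, ⟨γ, γ', hγ, rfl⟩, hlt⟩ := exists_lt_of_csInf_lt nonempty_admissible_energies h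
  exact ⟨γ, γ', hγ, hlt⟩

end g0

lemma sq_sub_sq_div_le_sub {x y r : ℝ} (hy : 0 ≤ y) (hyx : y ≤ x) (hxr : x ≤ r) :
    (x ^ 2 - y ^ 2) / (2 * r) ≤ x - y :=
  div_le_of_le_mul₀ (by linarith) (by linarith) (by nlinarith [mul_nonneg (sub_nonneg.2 hyx) hy])

/-- The gain is uniform only where the slope `q` is small; the correction linear in `|q|`
makes the bound hold for every slope, so that it can be integrated against a curve of bounded
total variation. -/
lemma mul_one_sub_abs_le_sqrt_sub_sqrt {u v a c L q : ℝ} (hu : 0 ≤ u) (huv : u ≤ v)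
    (hca : c ^ 2 ≤ a) (haL : a ≤ L ^ 2) :
    (v - u) * c ^ 2 / (2 * √(v * L ^ 2 + 4)) * (1 - |q| / 4)
      ≤ √(v * a + q ^ 2 / 4) - √(u * a + q ^ 2 / 4) := by
  have ha : 0 ≤ a := (sq_nonneg c).trans hca
  have hv : 0 ≤ v := hu.trans huv
  have hyx : √(u * a + q ^ 2 / 4) ≤ √(v * a + q ^ 2 / 4) :=
    Real.sqrt_le_sqrt (by nlinarith)
  have hD : 0 ≤ (v - u) * c ^ 2 / (2 * √(v * L ^ 2 + 4)) := by
    have := sub_nonneg.2 huv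
    positivity
  rcases le_or_gt |q| 4 with hq | hq
  · have hxr : √(v * a + q ^ 2 / 4) ≤ √(v * L ^ 2 + 4) :=
      Real.sqrt_le_sqrt (by nlinarith [sq_abs q, abs_nonneg q])
    have hsq : √(v * a + q ^ 2 / 4) ^ 2 - √(u * a + q ^ 2 / 4) ^ 2 = (v - u) * a := by
      rw [Real.sq_sqrt (by positivity), Real.sq_sqrt (by positivity)]
      ring
    calc (v - u) * c ^ 2 / (2 * √(v * L ^ 2 + 4)) * (1 - |q| / 4)
        ≤ (v - u) * c ^ 2 / (2 * √(v * L ^ 2 + 4)) :=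
          mul_le_of_le_one_right hD (by linarith [abs_nonneg q])
      _ ≤ (v - u) * a / (2 * √(v * L ^ 2 + 4)) := by gcongr
      _ ≤ _ := hsq ▸ sq_sub_sq_div_le_sub (Real.sqrt_nonneg _) hyx hxr
  · have : (v - u) * c ^ 2 / (2 * √(v * L ^ 2 + 4)) * (1 - |q| / 4) ≤ 0 :=
      mul_nonpos_of_nonneg_of_nonpos hD (by linarith)
    linarith

theorem energy_add_le_energy {f₁ γ γ' : ℝ → ℝ} {s s' B : ℝ}
    (hf : ContinuousOn f₁ (Icc 0 1)) (hanti : AntitoneOn f₁ (Icc 0 1))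
    (hB : B ∈ Icc (0 : ℝ) 1) (hc : 0 ≤ f₁ √B) (hss : s' ^ 2 ≤ s ^ 2)
    (hγ : Admissible γ γ') (hE : energy f₁ s γ γ' ≤ B) :
    energy f₁ s' γ γ' + (s ^ 2 - s' ^ 2) * f₁ √B ^ 2 / (4 * √(s ^ 2 * f₁ 0 ^ 2 + 4))
      ≤ energy f₁ s γ γ' := by
  set D := (s ^ 2 - s' ^ 2) * f₁ √B ^ 2 / (2 * √(s ^ 2 * f₁ 0 ^ 2 + 4))
  have hsqrtB : √B ∈ Icc (0 : ℝ) 1 := ⟨Real.sqrt_nonneg _, Real.sqrt_le_one.2 hB.2⟩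
  have hpt : ∀ t ∈ Icc (0 : ℝ) 1, energyDensity f₁ s' γ γ' t + D - D / 4 * |γ' t|
      ≤ energyDensity f₁ s γ γ' t := by
    intro t ht
    have hlow : f₁ √B ≤ f₁ √(γ t) := hanti (hγ.sqrt_mem_Icc ht) hsqrtB
      (Real.sqrt_le_sqrt ((hγ.le_energy hf ht).trans hE))
    have hup : f₁ √(γ t) ≤ f₁ 0 :=
      hanti ⟨le_rfl, zero_le_one⟩ (hγ.sqrt_mem_Icc ht) (Real.sqrt_nonneg _)
    have := mul_one_sub_abs_le_sqrt_sub_sqrt (q := γ' t) (sq_nonneg s') hss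
      (pow_le_pow_left₀ hc hlow 2) (pow_le_pow_left₀ (hc.trans hlow) hup 2)
    unfold energyDensity
    linarith
  have hint := hγ.intervalIntegrable.abs
  have hmono := integral_mono_on zero_le_one
    (((intervalIntegrable_energyDensity hf hγ).add intervalIntegrable_const).sub
      (hint.const_mul (D / 4)))
    (intervalIntegrable_energyDensity hf hγ) hpt
  rw [intervalIntegral.integral_sub (((intervalIntegrable_energyDensity hf hγ).add
      intervalIntegrable_const)) (hint.const_mul (D / 4)),
    intervalIntegral.integral_add (intervalIntegrable_energyDensity hf hγ) intervalIntegrable_const,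
    intervalIntegral.integral_const_mul, intervalIntegral.integral_const,
    ← energy_eq_integral_energyDensity, ← energy_eq_integral_energyDensity] at hmono
  have hvar : ∫ u in (0 : ℝ)..1, |γ' u| ≤ 2 := by
    linarith [integral_abs_le_two_mul_energy (s := s) hf hγ, hB.2]
  have hD : 0 ≤ D := by
    have := sub_nonneg.2 hss
    positivity
  have : D / 4 * ∫ u in (0 : ℝ)..1, |γ' u| ≤ D / 4 * 2 := by gcongr
  have hDhalf : (s ^ 2 - s' ^ 2) * f₁ √B ^ 2 / (4 * √(s ^ 2 * f₁ 0 ^ 2 + 4)) = D / 2 := by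
    ring
  simp only [sub_zero, smul_eq_mul, one_mul] at hmono
  linarith

/-- strict monotonicity of `g₀` below the fracture threshold. -/
theorem stmt_17 (ℓ ℓ₁ : ℝ) (f₁ : ℝ → ℝ) (hf : F1Hyp ℓ ℓ₁ f₁)
    (s' s : ℝ) (h0 : 0 ≤ s') (hss : s' < s) (hlt : g0 f₁ s < 1) :
    g0 f₁ s' < g0 f₁ s := by
  set B := (1 + g0 f₁ s) / 2 with hB_def
  have hgB : g0 f₁ s < B := by linarith
  have hB1 : B < 1 := by linarith
  have hB : B ∈ Icc (0 : ℝ) 1 := ⟨by linarith [g0_nonneg (f₁ := f₁) (s := s)], hB1.le⟩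
  have hc : 0 < f₁ √B := by
    have hsqrtB : √B < 1 := by simpa using Real.sqrt_lt_sqrt hB.1 hB1
    simpa [hf.f11] using hf.anti ⟨Real.sqrt_nonneg _, hsqrtB.le⟩ ⟨zero_le_one, le_rfl⟩ hsqrtB
  have hsq : s' ^ 2 < s ^ 2 := by nlinarith
  set δ := (s ^ 2 - s' ^ 2) * f₁ √B ^ 2 / (4 * √(s ^ 2 * f₁ 0 ^ 2 + 4))
  have hδ : 0 < δ := by
    have := sub_pos.2 hsq
    positivity
  obtain ⟨γ, γ', hγ, hE⟩ := exists_admissible_energy_lt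
    (show g0 f₁ s < min B (g0 f₁ s + δ) from lt_min hgB (by linarith))
  have hgap := energy_add_le_energy hf.cont hf.anti.antitoneOn hB hc.le hsq.le hγ
    (hE.trans_le (min_le_left _ _)).le
  calc g0 f₁ s' ≤ energy f₁ s' γ γ' := g0_le_energy hγ
    _ < g0 f₁ s := by linarith [hE.trans_le (min_le_right _ _)]
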